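/- The sum over k ≥ 1 of h_k^{(3)}/k² equals (93/8)·ζ(5) − (21/4)·ζ(2)·ζ(3). -/

import Mathlib

open scoped BigOperators

/-- Odd harmonic number `h_k^{(n)} = ∑_{i=1}^k 1/(2i-1)^n`. -/
noncomputable def h (n k : ℕ) : ℝ := ∑ i ∈ Finset.range k, (1 : ℝ) / (2 * (i : ℝ) + 1) ^ n

/-- Generalized harmonic number `H_k^{(n)} = ∑_{i=1}^k 1/i^n`. -/
noncomputable def H (n k : ℕ) : ℝ := ∑ i ∈ Finset.range k, (1 : ℝ) / ((i : ℝ) + 1) ^ n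

/-- Riemann zeta value at a positive integer `m ≥ 2`: `ζ(m) = ∑_{n≥1} 1/n^m`. -/
noncomputable def Z (m : ℕ) : ℝ := ∑' n : ℕ+, (1 : ℝ) / ((n : ℕ) : ℝ) ^ m

/-!
Let λ(s) = ∑_{n odd} n^{-s} = (1 - 2^{-s}) ζ(s), and consider the Tornheim-type double sums
T(p,q,r) = ∑_{m,n odd} m^{-p} n^{-q} (m+n)^{-r} and M(p,q,r), the same sum with n even.
The partial fraction 1/(mn) = (1/m + 1/n)/(m+n) gives T(p+1,q+1,r) = T(p,q+1,r+1) + T(p+1,q,r+1),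
and since m + n is even in T, T(0,q,r) = ∑_c h_c^{(q)}/(2c)^r; in particular the series of the
theorem is 4 T(0,3,2). Reducing T(3,2,0) = λ(3)λ(2) and T(3,1,1) in this way, splitting λ(3)λ(2)
along the diagonal into λ(5) plus sums M(p,0,r), and evaluating T(3,1,1) + M(3,1,1) as
∑_{m odd} H_m/m^4 by telescoping over n, yields T(0,3,2) + 2λ(3)λ(2) = 3λ(5).
All double series are handled in ℝ≥0∞, where they can be rearranged freely.
-/

open Filter Topology Finset
open scoped ENNReal

lemma ENNReal.tsum_prod_eq_tsum_sum_antidiagonal {A : Type*} [AddMonoid A] [HasAntidiagonal A]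
    (f : A × A → ℝ≥0∞) : ∑' p, f p = ∑' n, ∑ p ∈ antidiagonal n, f p := by
  rw [← HasAntidiagonal.sigmaAntidiagonalEquivProd.tsum_eq, ENNReal.tsum_sigma']
  refine tsum_congr fun n => ?_
  rw [← Finset.sum_coe_sort, tsum_fintype]
  rfl

lemma ENNReal.tsum_tsum_add_add_one (g : ℕ → ℕ → ℝ≥0∞) :
    ∑' j, ∑' d, g j (j + d + 1) = ∑' c, ∑ j ∈ range c, g j c := by
  rw [← ENNReal.tsum_prod, ENNReal.tsum_prod_eq_tsum_sum_antidiagonal]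
  conv_rhs => rw [tsum_eq_zero_add' ENNReal.summable, range_zero, sum_empty, zero_add]
  refine tsum_congr fun n => ?_
  rw [sum_congr rfl fun p hp => by rw [mem_antidiagonal.mp hp]]
  exact Nat.sum_antidiagonal_eq_sum_range_succ_mk (fun p => g p.1 (n + 1)) n

lemma ENNReal.tsum_tsum_eq_diag_add (g : ℕ → ℕ → ℝ≥0∞) :
    ∑' i, ∑' j, g i j
      = ∑' i, g i i + ∑' i, ∑' d, g i (i + d + 1) + ∑' j, ∑' d, g (j + d + 1) j := by
  have row (i : ℕ) : ∑' j, g i j = ∑ j ∈ range i, g i j + g i i + ∑' d, g i (i + d + 1) := by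
    rw [← ENNReal.summable.sum_add_tsum_nat_add' (k := i + 1), sum_range_succ]
    simp only [add_assoc, add_comm _ (i + 1), add_comm 1]
  simp_rw [row, ENNReal.tsum_add, ENNReal.tsum_tsum_add_add_one fun j c => g c j]
  ring

lemma hasSum_sub_add_of_antitone {f : ℕ → ℝ} (hf : Antitone f) (hlim : Tendsto f atTop (𝓝 0))
    (n : ℕ) : HasSum (fun b => f b - f (b + n)) (∑ k ∈ range n, f k) := by
  rw [hasSum_iff_tendsto_nat_of_nonneg fun b => sub_nonneg.2 (hf (Nat.le_add_right b n))]
  have partial_sum (N : ℕ) : ∑ b ∈ range N, (f b - f (b + n))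
      = ∑ k ∈ range n, f k - ∑ k ∈ range n, f (N + k) := by
    have h₁ := sum_range_add f N n
    have h₂ := sum_range_add f n N
    rw [add_comm n N] at h₂
    simp only [sum_sub_distrib, add_comm _ n]
    linarith
  simp only [partial_sum]
  simpa using tendsto_const_nhds.sub
    (tendsto_finsetSum (range n) fun k _ => hlim.comp (tendsto_add_atTop_nat k))

lemma sum_range_two_mul {β : Type*} [AddCommMonoid β] (f : ℕ → β) (n : ℕ) :
    ∑ k ∈ range (2 * n), f k = ∑ j ∈ range n, (f (2 * j) + f (2 * j + 1)) := by
  induction n with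
  | zero => simp
  | succ n ih =>
    rw [mul_add, mul_one, sum_range_succ, sum_range_succ, sum_range_succ, ih, add_assoc]

lemma H_one_le (n : ℕ) : H 1 n ≤ n := by
  calc H 1 n ≤ ∑ _k ∈ range n, (1 : ℝ) := sum_le_sum fun k _ => by
          rw [pow_one, div_le_one (by positivity)]
          linarith [(k.cast_nonneg : (0 : ℝ) ≤ k)]
    _ = n := by simp

lemma H_one_two_mul_add_one (c : ℕ) :
    H 1 (2 * c + 1) = ∑ j ∈ range c, 1 / ((2 * j + 1 : ℕ) : ℝ) ^ 1 + 1 / ((2 * c + 1 : ℕ) : ℝ)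
      + ∑ j ∈ range c, 1 / ((2 * j + 2 : ℕ) : ℝ) ^ 1 := by
  rw [H, sum_range_succ, sum_range_two_mul, sum_add_distrib]
  push_cast
  ring_nf

lemma hasSum_one_div_mul_add (n : ℕ) (hn : 0 < n) :
    HasSum (fun b : ℕ => 1 / (((b : ℝ) + 1) * (n + ((b : ℝ) + 1)))) (H 1 n / n) := by
  have hf : Antitone fun b : ℕ => 1 / ((b : ℝ) + 1) := fun a b hab => by
    simp only [one_div]
    gcongr
  have tel := (hasSum_sub_add_of_antitone hf tendsto_one_div_add_atTop_nhds_zero_nat n).div_const n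
  rw [show H 1 n = ∑ k ∈ range n, 1 / ((k : ℝ) + 1) by simp only [H, pow_one]]
  refine tel.congr_fun fun b => ?_
  have : (n : ℝ) ≠ 0 := by positivity
  push_cast
  field_simp
  ring

lemma one_div_pow_mul_pow_mul_add_pow {x y : ℝ} (hx : 0 < x) (hy : 0 < y) (p q r : ℕ) :
    1 / (x ^ (p + 1) * y ^ (q + 1) * (x + y) ^ r)
      = 1 / (x ^ p * y ^ (q + 1) * (x + y) ^ (r + 1))
        + 1 / (x ^ (p + 1) * y ^ q * (x + y) ^ (r + 1)) := by
  field_simp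
  ring

noncomputable def tornheim (u v : ℕ → ℕ) (p q r : ℕ) : ℝ≥0∞ :=
  ∑' i, ∑' j, ENNReal.ofReal (1 / ((u i : ℝ) ^ p * (v j : ℝ) ^ q * ((u i : ℝ) + v j) ^ r))

section Tornheim

variable {u v : ℕ → ℕ}

lemma tornheim_comm (u v : ℕ → ℕ) (p q r : ℕ) : tornheim u v p q r = tornheim v u q p r := by
  rw [tornheim, ENNReal.tsum_comm]
  simp only [tornheim, mul_comm ((u _ : ℝ) ^ p), add_comm (u _ : ℝ)]

lemma tornheim_succ_succ (hu : ∀ i, 0 < u i) (hv : ∀ j, 0 < v j) (p q r : ℕ) :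
    tornheim u v (p + 1) (q + 1) r
      = tornheim u v p (q + 1) (r + 1) + tornheim u v (p + 1) q (r + 1) := by
  simp only [tornheim, ← ENNReal.tsum_add]
  refine tsum_congr fun i => tsum_congr fun j => ?_
  rw [one_div_pow_mul_pow_mul_add_pow (by exact_mod_cast hu i) (by exact_mod_cast hv j),
    ENNReal.ofReal_add (by positivity) (by positivity)]

lemma tornheim_eq_mul (u v : ℕ → ℕ) (p q : ℕ) :
    tornheim u v p q 0
      = (∑' i, ENNReal.ofReal (1 / (u i : ℝ) ^ p)) * ∑' j, ENNReal.ofReal (1 / (v j : ℝ) ^ q) := by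
  rw [tornheim, ← ENNReal.tsum_mul_right]
  refine tsum_congr fun i => ?_
  rw [← ENNReal.tsum_mul_left]
  refine tsum_congr fun j => ?_
  rw [pow_zero, mul_one, ← ENNReal.ofReal_mul (by positivity), one_div_mul_one_div]

lemma tornheim_zero_fst {w : ℕ → ℕ} (hw : ∀ i j, u i + v j = w (i + j + 1)) (q r : ℕ) :
    tornheim u v 0 q r
      = ∑' c, ENNReal.ofReal ((∑ j ∈ range c, 1 / (v j : ℝ) ^ q) / (w c : ℝ) ^ r) := by
  have term (i j : ℕ) : 1 / ((u i : ℝ) ^ 0 * (v j : ℝ) ^ q * ((u i : ℝ) + v j) ^ r)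
      = 1 / ((v j : ℝ) ^ q * (w (j + i + 1) : ℝ) ^ r) := by
    rw [pow_zero, one_mul, add_comm j, ← hw, Nat.cast_add]
  rw [tornheim, ENNReal.tsum_comm]
  simp only [term]
  rw [ENNReal.tsum_tsum_add_add_one fun j c => ENNReal.ofReal (1 / ((v j : ℝ) ^ q * (w c : ℝ) ^ r))]
  refine tsum_congr fun c => ?_
  rw [← ENNReal.ofReal_sum_of_nonneg fun j _ => by positivity, sum_div]
  simp only [div_div]

lemma tornheim_self_eq_diag_add (hw : ∀ i d, u i + v d = u (i + d + 1)) (p q : ℕ) :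
    tornheim u u p q 0
      = ∑' i, ENNReal.ofReal (1 / (u i : ℝ) ^ (p + q))
        + tornheim u v p 0 q + tornheim u v q 0 p := by
  have hw' (i d : ℕ) : (u i : ℝ) + v d = u (i + d + 1) := by exact_mod_cast hw i d
  rw [tornheim, ENNReal.tsum_tsum_eq_diag_add]
  simp only [tornheim, hw', pow_zero, mul_one, ← pow_add]
  congr 2
  simp only [mul_comm]

lemma tornheim_add_one_eq_add (u : ℕ → ℕ) (p q r : ℕ) :
    tornheim u (· + 1) p q r = tornheim u (2 * · + 1) p q r + tornheim u (2 * · + 2) p q r := by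
  simp only [tornheim, ← ENNReal.tsum_add]
  refine tsum_congr fun i => ?_
  rw [ENNReal.tsum_add]
  exact (tsum_even_add_odd ENNReal.summable ENNReal.summable).symm

lemma tornheim_add_one_one_one (hu : ∀ i, 0 < u i) (p : ℕ) :
    tornheim u (· + 1) p 1 1 = ∑' i, ENNReal.ofReal (H 1 (u i) / (u i : ℝ) ^ (p + 1)) := by
  refine tsum_congr fun i => ?_
  have key : HasSum (fun b : ℕ => 1 / ((u i : ℝ) ^ p * ((b + 1 : ℕ) : ℝ) ^ 1
      * ((u i : ℝ) + ((b + 1 : ℕ) : ℝ)) ^ 1)) (H 1 (u i) / (u i : ℝ) ^ (p + 1)) := by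
    rw [pow_succ', ← div_div, div_eq_mul_one_div _ ((u i : ℝ) ^ p), mul_comm]
    refine ((hasSum_one_div_mul_add (u i) (hu i)).mul_left (1 / (u i : ℝ) ^ p)).congr_fun
      fun b => ?_
    push_cast
    field_simp
  rw [← ENNReal.ofReal_tsum_of_nonneg (fun b => by positivity) key.summable, key.tsum_eq]

end Tornheim

lemma ENNReal.toReal_tsum_ofReal {α : Type*} {f : α → ℝ} (hf : ∀ a, 0 ≤ f a) :
    (∑' a, ENNReal.ofReal (f a)).toReal = ∑' a, f a := by
  rw [ENNReal.tsum_toReal_eq fun _ => ENNReal.ofReal_ne_top]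
  exact tsum_congr fun a => ENNReal.toReal_ofReal (hf a)

lemma Z_eq_tsum_nat {s : ℕ} (hs : s ≠ 0) : Z s = ∑' n : ℕ, 1 / (n : ℝ) ^ s :=
  tsum_pnat_eq_tsum_of_eq_zero (f := fun n : ℕ => 1 / (n : ℝ) ^ s) (by simp [hs])

lemma summable_one_div_two_mul_add_one_pow {s : ℕ} (hs : 2 ≤ s) :
    Summable fun i : ℕ => 1 / ((2 * i + 1 : ℕ) : ℝ) ^ s :=
  (Real.summable_one_div_nat_pow.2 (by omega)).comp_injective fun a b hab => by
    simpa using hab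

lemma tsum_one_div_two_mul_add_one_pow {s : ℕ} (hs : 2 ≤ s) :
    ∑' i : ℕ, 1 / (2 * (i : ℝ) + 1) ^ s = (1 - 1 / 2 ^ s) * Z s := by
  have hsum : Summable fun n : ℕ => 1 / (n : ℝ) ^ s := Real.summable_one_div_nat_pow.2 (by omega)
  have heven : ∑' k : ℕ, 1 / ((2 * k : ℕ) : ℝ) ^ s = 1 / 2 ^ s * Z s := by
    rw [Z_eq_tsum_nat (by omega), ← tsum_mul_left]
    refine tsum_congr fun k => ?_
    push_cast
    rw [mul_pow, one_div_mul_one_div]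
  have hsplit := tsum_even_add_odd (f := fun n : ℕ => 1 / (n : ℝ) ^ s)
    (hsum.comp_injective (i := (2 * ·)) fun a b hab => by simpa using hab)
    (hsum.comp_injective (i := (2 * · + 1)) fun a b hab => by simpa using hab)
  rw [heven, ← Z_eq_tsum_nat (by omega)] at hsplit
  push_cast at hsplit
  linarith

noncomputable def dirichletLambda (s : ℕ) : ℝ≥0∞ :=
  ∑' i : ℕ, ENNReal.ofReal (1 / ((2 * i + 1 : ℕ) : ℝ) ^ s)

lemma dirichletLambda_ne_top {s : ℕ} (hs : 2 ≤ s) : dirichletLambda s ≠ ⊤ := by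
  rw [dirichletLambda, ← ENNReal.ofReal_tsum_of_nonneg (fun _ => by positivity)
    (summable_one_div_two_mul_add_one_pow hs)]
  exact ENNReal.ofReal_ne_top

lemma dirichletLambda_toReal {s : ℕ} (hs : 2 ≤ s) :
    (dirichletLambda s).toReal = (1 - 1 / 2 ^ s) * Z s := by
  rw [dirichletLambda, ENNReal.toReal_tsum_ofReal fun _ => by positivity,
    ← tsum_one_div_two_mul_add_one_pow hs]
  push_cast
  rfl

section OddTornheim

/- `T p q r` and `M p q r` are the sums `T(p,q,r)` and `M(p,q,r)` of the header, indexed by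
`m = 2i+1` and `n = 2j+1`, resp. `n = 2j+2`. -/
local notation "T" => tornheim (2 * · + 1) (2 * · + 1)
local notation "M" => tornheim (2 * · + 1) (2 * · + 2)

lemma oddTornheim_three_two_zero : T 3 2 0 = 2 * T 2 1 2 + T 3 1 1 := by
  have h₁ : T 3 2 0 = T 2 2 1 + T 3 1 1 := tornheim_succ_succ (by simp) (by simp) 2 1 0
  have h₂ : T 2 2 1 = T 1 2 2 + T 2 1 2 := tornheim_succ_succ (by simp) (by simp) 1 1 1
  rw [h₁, h₂, tornheim_comm _ _ 1 2 2, two_mul]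

lemma oddTornheim_three_one_one : T 3 1 1 = T 2 1 2 + T 0 3 2 := by
  have h : T 3 1 1 = T 2 1 2 + T 3 0 2 := tornheim_succ_succ (by simp) (by simp) 2 0 1
  rw [h, tornheim_comm _ _ 3 0 2]

lemma oddTornheim_three_two_zero_eq_mul : T 3 2 0 = dirichletLambda 3 * dirichletLambda 2 :=
  tornheim_eq_mul _ _ 3 2

lemma oddTornheim_three_two_zero_eq_diag_add : T 3 2 0 = dirichletLambda 5 + M 3 0 2 + M 2 0 3 :=
  tornheim_self_eq_diag_add (fun i d => by omega) 3 2

lemma mixedTornheim_three_one_one : M 3 1 1 = M 0 1 4 + M 1 0 4 + M 2 0 3 + M 3 0 2 := by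
  have h₁ : M 3 1 1 = M 2 1 2 + M 3 0 2 := tornheim_succ_succ (by simp) (by simp) 2 0 1
  have h₂ : M 2 1 2 = M 1 1 3 + M 2 0 3 := tornheim_succ_succ (by simp) (by simp) 1 0 2
  have h₃ : M 1 1 3 = M 0 1 4 + M 1 0 4 := tornheim_succ_succ (by simp) (by simp) 0 0 3
  rw [h₁, h₂, h₃]

lemma oddTornheim_add_mixedTornheim_three_one_one_eq_tsum :
    T 3 1 1 + M 3 1 1 = ∑' i, ENNReal.ofReal (H 1 (2 * i + 1) / ((2 * i + 1 : ℕ) : ℝ) ^ 4) := by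
  rw [← tornheim_add_one_eq_add, tornheim_add_one_one_one (by simp)]

lemma oddTornheim_add_mixedTornheim_three_one_one :
    T 3 1 1 + M 3 1 1 = M 1 0 4 + dirichletLambda 5 + M 0 1 4 := by
  rw [oddTornheim_add_mixedTornheim_three_one_one_eq_tsum, tornheim_comm _ _ 1 0 4,
    tornheim_zero_fst (w := (2 * · + 1)) (fun j i => by omega),
    tornheim_zero_fst (w := (2 * · + 1)) (fun i j => by omega), dirichletLambda,
    ← ENNReal.tsum_add, ← ENNReal.tsum_add]
  refine tsum_congr fun c => ?_
  rw [← ENNReal.ofReal_add (by positivity) (by positivity),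
    ← ENNReal.ofReal_add (by positivity) (by positivity), H_one_two_mul_add_one]
  congr 1
  ring

lemma oddTornheim_add_mixedTornheim_three_one_one_le : T 3 1 1 + M 3 1 1 ≤ dirichletLambda 3 := by
  rw [oddTornheim_add_mixedTornheim_three_one_one_eq_tsum]
  refine ENNReal.tsum_le_tsum fun i => ENNReal.ofReal_le_ofReal ?_
  calc H 1 (2 * i + 1) / ((2 * i + 1 : ℕ) : ℝ) ^ 4
      ≤ ((2 * i + 1 : ℕ) : ℝ) / ((2 * i + 1 : ℕ) : ℝ) ^ 4 := by gcongr; exact H_one_le _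
    _ = 1 / ((2 * i + 1 : ℕ) : ℝ) ^ 3 := by field_simp

lemma oddTornheim_zero_three_two_ne_top : T 0 3 2 ≠ ⊤ := by
  refine ne_top_of_le_ne_top (dirichletLambda_ne_top (by norm_num))
    (le_trans ?_ oddTornheim_add_mixedTornheim_three_one_one_le)
  rw [oddTornheim_three_one_one]
  exact le_add_self.trans le_self_add

lemma oddTornheim_zero_three_two_add :
    T 0 3 2 + 2 * (dirichletLambda 3 * dirichletLambda 2) = 3 * dirichletLambda 5 := by
  have hfin := ne_top_of_le_ne_top (dirichletLambda_ne_top (by norm_num))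
    oddTornheim_add_mixedTornheim_three_one_one_le
  rw [mixedTornheim_three_one_one] at hfin
  simp only [ENNReal.add_ne_top] at hfin
  obtain ⟨hT311, ⟨⟨hM014, hM104⟩, -⟩, -⟩ := hfin
  have hT311_add : T 3 1 1 + (M 3 0 2 + M 2 0 3) = dirichletLambda 5 := by
    refine (ENNReal.add_left_inj (ENNReal.add_ne_top.2 ⟨hM014, hM104⟩)).1 ?_
    calc T 3 1 1 + (M 3 0 2 + M 2 0 3) + (M 0 1 4 + M 1 0 4) = T 3 1 1 + M 3 1 1 := by
          rw [mixedTornheim_three_one_one]; ring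
      _ = dirichletLambda 5 + (M 0 1 4 + M 1 0 4) := by
          rw [oddTornheim_add_mixedTornheim_three_one_one]; ring
  have hT212 : T 2 1 2 = M 3 0 2 + M 2 0 3 := by
    have h : 2 * T 2 1 2 + T 3 1 1 = 2 * (M 3 0 2 + M 2 0 3) + T 3 1 1 := by
      rw [← oddTornheim_three_two_zero, oddTornheim_three_two_zero_eq_diag_add, ← hT311_add]
      ring
    exact (ENNReal.mul_right_inj two_ne_zero ENNReal.ofNat_ne_top).1
      ((ENNReal.add_left_inj hT311).1 h)
  rw [← oddTornheim_three_two_zero_eq_mul, ← hT311_add, oddTornheim_three_two_zero, hT212,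
    oddTornheim_three_one_one, hT212]
  ring

lemma oddTornheim_zero_three_two_toReal :
    (T 0 3 2).toReal = ∑' c : ℕ, h 3 c / (2 * (c : ℝ)) ^ 2 := by
  rw [tornheim_zero_fst (w := (2 * ·)) (fun i j => by omega),
    ENNReal.toReal_tsum_ofReal fun c => by positivity]
  push_cast
  rfl

end OddTornheim

lemma tsum_h_three_div_two_mul_sq :
    ∑' c : ℕ, h 3 c / (2 * (c : ℝ)) ^ 2 = 93 / 32 * Z 5 - 21 / 16 * Z 2 * Z 3 := by
  have key := congrArg ENNReal.toReal oddTornheim_zero_three_two_add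
  have h₃ := dirichletLambda_ne_top (s := 3) (by norm_num)
  have h₂ := dirichletLambda_ne_top (s := 2) (by norm_num)
  rw [ENNReal.toReal_add oddTornheim_zero_three_two_ne_top (by finiteness), ENNReal.toReal_mul,
    ENNReal.toReal_mul, ENNReal.toReal_mul, oddTornheim_zero_three_two_toReal,
    dirichletLambda_toReal (by norm_num), dirichletLambda_toReal (by norm_num),
    dirichletLambda_toReal (by norm_num)] at key
  norm_num at key
  linarith

lemma tsum_pnat_h_three_div_sq :
    ∑' k : ℕ+, h 3 (k : ℕ) / ((k : ℕ) : ℝ) ^ 2 = 4 * ∑' c : ℕ, h 3 c / (2 * (c : ℝ)) ^ 2 := by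
  rw [tsum_pnat_eq_tsum_of_eq_zero (f := fun n : ℕ => h 3 n / (n : ℝ) ^ 2) (by simp),
    ← tsum_mul_left]
  refine tsum_congr fun c => ?_
  ring

theorem stmt18 :
    (∑' k : ℕ+, h 3 (k : ℕ) / ((k : ℕ) : ℝ) ^ 2) = 93 / 8 * Z 5 - 21 / 4 * Z 2 * Z 3 := by
  rw [tsum_pnat_h_three_div_sq, tsum_h_three_div_two_mul_sq]
  ring
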